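/- Let a, b ∈ H_n. There exists a constant K ∈ ℕ, depending only on a and b, with the following property: for every x ∈ H_n with x^{-1} a x = b, all i, j ∈ {1,…,n} with t_i(a) ≠ 0 and t_j(a) ≠ 0, all integers l_i, l_j with t_i(x) = l_i·|t_i(a)| and t_j(x) = l_j·|t_j(a)|, and all r, s such that X_{i,r}(a) ∪ X_{j,s}(a) is almost equal to some infinite orbit of a, one has | |l_i| − |l_j| | ≤ K. -/

import Mathlib

namespace HoughtonPaper

/-- The set `X_n = {1,…,n} × ℕ` (rays indexed by `Fin n`). -/
abbrev X (n : ℕ) := Fin n × ℕ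

/-- `g` acts as the translation by `t i` on the ray `i` from the point `z` on. -/
def EvTransFrom {n : ℕ} (g : Equiv.Perm (X n)) (t : Fin n → ℤ) (z : ℕ) : Prop :=
  ∀ (i : Fin n) (m : ℕ), z ≤ m →
    (g (i, m)).1 = i ∧ ((g (i, m)).2 : ℤ) = (m : ℤ) + t i

/-- `g` is eventually a translation with translation vector `t`. -/
def EvTrans {n : ℕ} (g : Equiv.Perm (X n)) (t : Fin n → ℤ) : Prop :=
  ∃ z : ℕ, EvTransFrom g t z

/-- Membership in Houghton's group `H_n`. -/
def InH {n : ℕ} (g : Equiv.Perm (X n)) : Prop :=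
  ∃ t : Fin n → ℤ, EvTrans g t

/-- Support of a permutation. -/
def supp {α : Type*} (g : Equiv.Perm α) : Set α := {x | g x ≠ x}

/-- Membership in `FSym(X_n)`, the finitely supported permutations. -/
def InFSym {n : ℕ} (g : Equiv.Perm (X n)) : Prop := (supp g).Finite

/-- Two sets are almost equal if their symmetric difference is finite. -/
def AlmostEq {α : Type*} (A B : Set α) : Prop := (symmDiff A B).Finite

/-- The set `X_{i,r}(g) = {(i,m) : m ≡ r mod |t_i(g)|}`, for `t` the translation vector. -/
def Xir {n : ℕ} (i : Fin n) (t : Fin n → ℤ) (r : ℕ) : Set (X n) :=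
  {p : X n | p.1 = i ∧ p.2 % (t i).natAbs = r}

/-- Forward orbit `{(i,m)g^k : k ≥ 0}`. -/
def fwdOrbit {n : ℕ} (g : Equiv.Perm (X n)) (p : X n) : Set (X n) :=
  Set.range fun k : ℕ => (g ^ k) p

/-- The orbit `{x g^k : k ∈ ℤ}`. -/
def orbit {n : ℕ} (g : Equiv.Perm (X n)) (p : X n) : Set (X n) :=
  Set.range fun k : ℤ => (g ^ k) p

/-- `A` is an infinite orbit of `g`. -/
def IsInfOrbit {n : ℕ} (g : Equiv.Perm (X n)) (A : Set (X n)) : Prop :=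
  (∃ p : X n, A = orbit g p) ∧ A.Infinite

/-- The generating relation of `∼_g`: some infinite orbit of `g` is almost equal
to `X_{i,r}(g) ∪ X_{j,s}(g)`. -/
def BaseRel {n : ℕ} (g : Equiv.Perm (X n)) (t : Fin n → ℤ) (i j : Fin n) : Prop :=
  ∃ r s : ℕ, r < (t i).natAbs ∧ s < (t j).natAbs ∧
    ∃ A : Set (X n), IsInfOrbit g A ∧ AlmostEq A (Xir i t r ∪ Xir j t s)

/-- The equivalence relation `∼_g` on the rays, generated by `BaseRel`. -/
def SimRel {n : ℕ} (g : Equiv.Perm (X n)) (t : Fin n → ℤ) : Fin n → Fin n → Prop :=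
  Relation.EqvGen (BaseRel g t)

def genFun {n : ℕ} [NeZero n] (i : Fin n) : X n → X n :=
  fun p =>
    if p.1 = 0 then ((0 : Fin n), p.2 + 1)
    else if p.1 = i then (if p.2 = 0 then ((0 : Fin n), 0) else (i, p.2 - 1))
    else p

def genInvFun {n : ℕ} [NeZero n] (i : Fin n) : X n → X n :=
  fun p =>
    if p.1 = 0 then (if p.2 = 0 then (i, 0) else ((0 : Fin n), p.2 - 1))
    else if p.1 = i then (i, p.2 + 1)
    else p

/-- The generator `g_i` of Houghton's group (ray `1` of the paper is ray `0` here). -/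
def gen {n : ℕ} [NeZero n] (i : Fin n) (hi : i ≠ 0) : Equiv.Perm (X n) where
  toFun := genFun i
  invFun := genInvFun i
  left_inv := by
    rintro ⟨j, m⟩
    by_cases hj : j = 0
    · subst hj
      simp [genFun, genInvFun]
    · by_cases hji : j = i
      · subst hji
        rcases Nat.eq_zero_or_pos m with hm | hm
        · subst hm; simp [genFun, genInvFun, hi]
        · simp [genFun, genInvFun, hi, hm.ne', Nat.sub_add_cancel hm]
      · simp [genFun, genInvFun, hj, hji]
  right_inv := by
    rintro ⟨j, m⟩
    by_cases hj : j = 0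
    · subst hj
      rcases Nat.eq_zero_or_pos m with hm | hm
      · subst hm; simp [genFun, genInvFun, hi]
      · simp [genFun, genInvFun, hm.ne', hi.symm, Nat.sub_add_cancel hm]
    · by_cases hji : j = i
      · subst hji
        simp [genFun, genInvFun, hj]
      · simp [genFun, genInvFun, hj, hji]

/-- The transposition `τ` exchanging `(1,0)` and `(2,0)` (here `(0,0)` and `(1,0)`). -/
def tau (n : ℕ) [NeZero n] : Equiv.Perm (X n) :=
  Equiv.swap ((0 : Fin n), 0) ((1 : Fin n), 0)

/-- Letters of the alphabet `{g_2,…,g_n}^{±1}`. -/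
abbrev Letter (n : ℕ) [NeZero n] := {i : Fin n // i ≠ 0} × Bool

/-- Words over `{g_2,…,g_n}^{±1}`. -/
abbrev Word (n : ℕ) [NeZero n] := List (Letter n)

def evalLetter {n : ℕ} [NeZero n] (l : Letter n) : Equiv.Perm (X n) :=
  if l.2 then gen l.1.1 l.1.2 else (gen l.1.1 l.1.2)⁻¹

/-- The element of `Sym(X_n)` represented by a word. -/
def wordProd {n : ℕ} [NeZero n] (w : Word n) : Equiv.Perm (X n) :=
  (w.map evalLetter).prod

/-!
Let `x'` be one conjugator from `a` to `b` whose translations on rays `i` and `j` are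
multiples `li' |t_i(a)|`, `lj' |t_j(a)|`. For any other such conjugator `x`, the element
`c = x x'⁻¹` commutes with `a` and preserves residue classes mod `|t_i(a)|` and `|t_j(a)|`, so it
maps the infinite orbit `A ≈ X_{i,r}(a) ∪ X_{j,s}(a)` to an almost equal orbit, i.e. to `A`
itself. On `A` it then agrees with some power `a^k`, and comparing translations far out on rays
`i` and `j` gives `li - li' = ± k` and `lj - lj' = ± k`; hence `| |li| - |lj| | ≤ |li'| + |lj'|`.
Taking the maximum over the finitely many pairs `(i, j)` gives `K`.
-/

section AlmostEq

variable {α : Type*} {A B C D : Set α}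

lemma AlmostEq.symm (h : AlmostEq A B) : AlmostEq B A := by
  rwa [AlmostEq, symmDiff_comm]

lemma AlmostEq.trans (h₁ : AlmostEq A B) (h₂ : AlmostEq B C) : AlmostEq A C :=
  (Set.Finite.union h₁ h₂).subset (symmDiff_triangle A B C)

lemma AlmostEq.union (h₁ : AlmostEq A C) (h₂ : AlmostEq B D) : AlmostEq (A ∪ B) (C ∪ D) :=
  (Set.Finite.union h₁ h₂).subset Set.union_symmDiff_union_subset

lemma AlmostEq.image (c : Equiv.Perm α) (h : AlmostEq A B) : AlmostEq (c '' A) (c '' B) := by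
  rw [AlmostEq, ← Set.image_symmDiff c.injective]
  exact Set.Finite.image c h

lemma AlmostEq.diff_finite (h : AlmostEq A B) : (A \ B).Finite :=
  Set.Finite.subset h fun _ hx => Or.inl hx

lemma almostEq_image_self {c : Equiv.Perm α} {T W : Set α} (hW : W.Finite)
    (hc : Set.MapsTo c (T \ W) T) (hc' : Set.MapsTo ⇑(c⁻¹) (T \ W) T) : AlmostEq (c '' T) T := by
  refine ((hW.image c).union hW).subset ?_
  rintro q (⟨⟨p, hpT, rfl⟩, hqT⟩ | ⟨hqT, hq⟩)
  · exact Or.inl ⟨p, by_contra fun hpW => hqT (hc ⟨hpT, hpW⟩), rfl⟩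
  · exact Or.inr <| by_contra fun hqW => hq ⟨c⁻¹ q, hc' ⟨hqT, hqW⟩, by simp⟩

end AlmostEq

section Orbit

variable {n : ℕ} {a c : Equiv.Perm (X n)} {p q : X n}

lemma mem_orbit_self (a : Equiv.Perm (X n)) (p : X n) : p ∈ orbit a p :=
  ⟨0, rfl⟩

lemma orbit_eq_of_mem (h : q ∈ orbit a p) : orbit a q = orbit a p := by
  obtain ⟨k, rfl⟩ := h
  ext y
  simp only [orbit, Set.mem_range, ← Equiv.Perm.mul_apply, ← zpow_add]
  exact ⟨fun ⟨l, hl⟩ => ⟨l + k, hl⟩, fun ⟨l, hl⟩ => ⟨l - k, by rwa [sub_add_cancel]⟩⟩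

lemma image_orbit_of_commute (hac : Commute a c) (p : X n) :
    c '' orbit a p = orbit a (c p) := by
  have hc : ∀ k : ℤ, c ((a ^ k) p) = (a ^ k) (c p) := fun k => by
    rw [← Equiv.Perm.mul_apply, ← (hac.zpow_left k).eq, Equiv.Perm.mul_apply]
  ext y
  simp only [orbit, Set.mem_image, Set.mem_range]
  constructor
  · rintro ⟨q, ⟨k, rfl⟩, rfl⟩
    exact ⟨k, (hc k).symm⟩
  · rintro ⟨k, rfl⟩
    exact ⟨(a ^ k) p, ⟨k, rfl⟩, hc k⟩

/-- Orbits are either equal or disjoint, and disjoint sets are almost equal only if both are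
finite. -/
lemma orbit_eq_of_almostEq (hinf : (orbit a p).Infinite)
    (h : AlmostEq (orbit a q) (orbit a p)) : orbit a q = orbit a p := by
  by_cases hmeet : (orbit a q ∩ orbit a p).Nonempty
  · obtain ⟨y, hyq, hyp⟩ := hmeet
    rw [← orbit_eq_of_mem hyq, orbit_eq_of_mem hyp]
  · exact absurd (Set.Finite.subset h fun y hy => Or.inr ⟨hy, fun hyq => hmeet ⟨y, hyq, hy⟩⟩) hinf

lemma exists_zpow_eqOn_orbit (hac : Commute a c) (hp : c p ∈ orbit a p) :
    ∃ k : ℤ, Set.EqOn c ⇑(a ^ k) (orbit a p) := by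
  obtain ⟨k, hk⟩ := hp
  refine ⟨k, ?_⟩
  rintro _ ⟨l, rfl⟩
  show c ((a ^ l) p) = (a ^ k) ((a ^ l) p)
  rw [← Equiv.Perm.mul_apply, ← (hac.zpow_left l).eq, Equiv.Perm.mul_apply, ← hk,
    ← Equiv.Perm.mul_apply, ← Equiv.Perm.mul_apply, ← zpow_add, ← zpow_add, add_comm]

end Orbit

section EvTrans

variable {n : ℕ} {g h : Equiv.Perm (X n)} {s t : Fin n → ℤ} {z : ℕ}

lemma EvTransFrom.mono {z' : ℕ} (hg : EvTransFrom g t z) (hz : z ≤ z') : EvTransFrom g t z' :=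
  fun i m hm => hg i m (hz.trans hm)

lemma EvTransFrom.apply_eq (hg : EvTransFrom g t z) {i : Fin n} {m : ℕ} (hm : z ≤ m) :
    g (i, m) = (i, ((m : ℤ) + t i).toNat) := by
  obtain ⟨h1, h2⟩ := hg i m hm
  exact Prod.ext h1 (by omega)

lemma EvTrans.mul (hg : EvTrans g s) (hh : EvTrans h t) : EvTrans (g * h) (s + t) := by
  obtain ⟨zg, hzg⟩ := hg
  obtain ⟨zh, hzh⟩ := hh
  obtain ⟨B, hB⟩ : ∃ B : ℕ, ∀ i, (t i).natAbs ≤ B := Finite.exists_le _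
  refine ⟨zh + zg + B, fun i m hm => ?_⟩
  obtain ⟨h1, h2⟩ := hzh i m (by omega)
  have hq : h (i, m) = (i, (h (i, m)).2) := Prod.ext h1 rfl
  have := hzg i (h (i, m)).2 (by have := hB i; omega)
  rw [Equiv.Perm.mul_apply, hq, this.2, h2, Pi.add_apply]
  exact ⟨this.1, by ring⟩

lemma EvTrans.inv (hg : EvTrans g t) : EvTrans g⁻¹ (-t) := by
  obtain ⟨z, hz⟩ := hg
  obtain ⟨B, hB⟩ : ∃ B : ℕ, ∀ i, (t i).natAbs ≤ B := Finite.exists_le _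
  refine ⟨z + B, fun i m hm => ?_⟩
  have hBi := hB i
  have hm' : z ≤ ((m : ℤ) - t i).toNat := by omega
  have hg_eq : g (i, ((m : ℤ) - t i).toNat) = (i, m) := by
    rw [hz.apply_eq hm']
    congr
    omega
  rw [← hg_eq, Equiv.Perm.inv_def, Equiv.symm_apply_apply]
  exact ⟨rfl, by simp only [Pi.neg_apply]; omega⟩

lemma EvTrans.pow (hg : EvTrans g t) (k : ℕ) : EvTrans (g ^ k) ((k : ℤ) • t) := by
  induction k with
  | zero => exact ⟨0, fun i m _ => by simp⟩
  | succ k ih => simpa [pow_succ, add_smul] using ih.mul hg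

lemma EvTrans.zpow (hg : EvTrans g t) (k : ℤ) : EvTrans (g ^ k) (k • t) := by
  rcases k with k | k
  · simpa using hg.pow k
  · rw [zpow_negSucc]
    convert (hg.pow (k + 1)).inv using 1
    rw [Int.negSucc_eq, neg_smul]
    norm_cast

lemma EvTrans.apply_eq_of_eqOn {A : Set (X n)} (hg : EvTrans g s) (hh : EvTrans h t)
    (heq : Set.EqOn g h A) {i : Fin n} (hA : {m | (i, m) ∈ A}.Infinite) : s i = t i := by
  obtain ⟨zg, hzg⟩ := hg
  obtain ⟨zh, hzh⟩ := hh
  obtain ⟨m, hmA, hm⟩ := hA.exists_gt (zg + zh)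
  have := congrArg (fun p : X n => (p.2 : ℤ)) (heq hmA)
  simp only [(hzg i m (by omega)).2, (hzh i m (by omega)).2] at this
  omega

end EvTrans

section Xir

variable {n : ℕ} {i : Fin n} {t : Fin n → ℤ} {r : ℕ}

lemma finite_setOf_snd_lt (z : ℕ) : {p : X n | p.2 < z}.Finite :=
  (Set.finite_univ.prod (Set.finite_Iio z)).subset fun _ hp => ⟨trivial, hp⟩

lemma mapsTo_Xir {c : Equiv.Perm (X n)} {tc : Fin n → ℤ} {z : ℕ} (hc : EvTransFrom c tc z)
    (hdvd : |t i| ∣ tc i) :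
    Set.MapsTo c (Xir i t r \ {p | p.2 < z}) (Xir i t r) := by
  rintro ⟨j, m⟩ ⟨⟨hj, hmr⟩, hmz⟩
  obtain rfl : i = j := hj.symm
  obtain ⟨h1, h2⟩ := hc i m (not_lt.mp hmz)
  refine ⟨h1, ?_⟩
  have hmod : m ≡ (c (i, m)).2 [MOD (t i).natAbs] := by
    rw [Nat.modEq_iff_dvd, h2, Int.natCast_natAbs, add_sub_cancel_left]
    exact hdvd
  rw [← hmr, hmod]

lemma almostEq_image_Xir {c : Equiv.Perm (X n)} {tc : Fin n → ℤ} (hc : EvTrans c tc)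
    (hdvd : |t i| ∣ tc i) : AlmostEq (c '' Xir i t r) (Xir i t r) := by
  obtain ⟨z, hz⟩ := hc
  obtain ⟨z', hz'⟩ := EvTrans.inv ⟨z, hz⟩
  refine almostEq_image_self (finite_setOf_snd_lt (max z z'))
    (mapsTo_Xir (hz.mono (le_max_left z z')) hdvd) ?_
  exact mapsTo_Xir (hz'.mono (le_max_right z z')) ((dvd_neg).mpr hdvd)

lemma infinite_ray_of_diff_finite {A : Set (X n)} (hr : r < (t i).natAbs)
    (hfin : (Xir i t r \ A).Finite) : {m | (i, m) ∈ A}.Infinite := by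
  have hres : {m | m % (t i).natAbs = r}.Infinite :=
    Nat.frequently_atTop_iff_infinite.mp (Nat.frequently_mod_eq hr)
  refine fun hA => hres ((hA.union (hfin.preimage (Prod.mk_right_injective i).injOn)).subset ?_)
  intro m hm
  by_cases hmA : (i, m) ∈ A
  · exact Or.inl hmA
  · exact Or.inr ⟨⟨rfl, hm⟩, hmA⟩

end Xir

section Conjugacy

variable {n : ℕ} {a c : Equiv.Perm (X n)} {ta tc : Fin n → ℤ} {A : Set (X n)}

/-- `c p` lies in the orbit of `p`, say `c p = (a ^ k) p`, and commutation with `a` spreads this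
over the whole orbit. -/
lemma exists_translation_eq_mul_of_commute (ha : EvTrans a ta) (hc : EvTrans c tc)
    (hac : Commute a c) (hA : IsInfOrbit a A) (hcA : AlmostEq (c '' A) A) :
    ∃ k : ℤ, ∀ i, {m | (i, m) ∈ A}.Infinite → tc i = k * ta i := by
  obtain ⟨⟨p, rfl⟩, hinf⟩ := hA
  rw [image_orbit_of_commute hac] at hcA
  have hcp : c p ∈ orbit a p := orbit_eq_of_almostEq hinf hcA ▸ mem_orbit_self a (c p)
  obtain ⟨k, hk⟩ := exists_zpow_eqOn_orbit hac hcp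
  exact ⟨k, fun i hi => hc.apply_eq_of_eqOn (ha.zpow k) hk hi⟩

lemma abs_eq_abs_of_mul_abs_eq_mul {l k t : ℤ} (ht : t ≠ 0) (h : l * |t| = k * t) : |l| = |k| := by
  have := congrArg abs h
  rw [abs_mul, abs_mul, abs_abs] at this
  exact mul_right_cancel₀ (abs_ne_zero.mpr ht) this

lemma abs_abs_sub_abs_le_of_abs_sub_eq {l₁ l₂ l₁' l₂' : ℤ} (h : |l₁ - l₁'| = |l₂ - l₂'|) :
    |(|l₁| - |l₂|)| ≤ |l₁'| + |l₂'| := by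
  have h₁ := abs_sub_abs_le_abs_sub l₁ l₁'
  have h₂ := abs_sub_abs_le_abs_sub l₂ l₂'
  have h₁' := abs_sub l₁ l₁'
  have h₂' := abs_sub l₂ l₂'
  rw [abs_le]
  constructor <;> linarith

/-- `x * x'⁻¹` centralises `a`; since it respects the residues `r, s` it preserves `A`, hence acts
on `A` as a power `a ^ k`, and so shifts both `li` and `lj` by `± k`. -/
lemma abs_abs_sub_abs_le_of_conj {b x x' : Equiv.Perm (X n)} {tx tx' : Fin n → ℤ}
    (ha : EvTrans a ta) (hx : EvTrans x tx) (hx' : EvTrans x' tx')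
    (hxb : x⁻¹ * a * x = b) (hx'b : x'⁻¹ * a * x' = b) {i j : Fin n} {li lj li' lj' : ℤ}
    (hli : tx i = li * |ta i|) (hlj : tx j = lj * |ta j|)
    (hli' : tx' i = li' * |ta i|) (hlj' : tx' j = lj' * |ta j|) {r s : ℕ}
    (hr : r < (ta i).natAbs) (hs : s < (ta j).natAbs)
    (hA : IsInfOrbit a A) (hAeq : AlmostEq (Xir i ta r ∪ Xir j ta s) A) :
    |(|li| - |lj|)| ≤ |li'| + |lj'| := by
  have hac : Commute a (x * x'⁻¹) :=
    calc a * (x * x'⁻¹) = x * (x⁻¹ * a * x) * x'⁻¹ := by group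
      _ = x * (x'⁻¹ * a * x') * x'⁻¹ := by rw [hxb, hx'b]
      _ = x * x'⁻¹ * a := by group
  set c := x * x'⁻¹
  have hc : EvTrans c (tx - tx') := by simpa only [sub_eq_add_neg] using hx.mul hx'.inv
  have hci : (li - li') * |ta i| = (tx - tx') i := by simp only [Pi.sub_apply, hli, hli']; ring
  have hcj : (lj - lj') * |ta j| = (tx - tx') j := by simp only [Pi.sub_apply, hlj, hlj']; ring
  have hcA : AlmostEq (c '' A) A := by
    refine ((hAeq.image c).symm.trans ?_).trans hAeq
    rw [Set.image_union]
    exact (almostEq_image_Xir hc (Dvd.intro_left _ hci)).union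
      (almostEq_image_Xir hc (Dvd.intro_left _ hcj))
  obtain ⟨k, hk⟩ := exists_translation_eq_mul_of_commute ha hc hac hA hcA
  have hAi := infinite_ray_of_diff_finite hr <|
    hAeq.diff_finite.subset (Set.sdiff_subset_sdiff_left Set.subset_union_left)
  have hAj := infinite_ray_of_diff_finite hs <|
    hAeq.diff_finite.subset (Set.sdiff_subset_sdiff_left Set.subset_union_right)
  have hki := abs_eq_abs_of_mul_abs_eq_mul (by omega) (hci.trans (hk i hAi))
  have hkj := abs_eq_abs_of_mul_abs_eq_mul (by omega) (hcj.trans (hk j hAj))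
  exact abs_abs_sub_abs_le_of_abs_sub_eq (hki.trans hkj.symm)

end Conjugacy

end HoughtonPaper

open HoughtonPaper

theorem statement10_general (n : ℕ) (a b : Equiv.Perm (X n)) (ta : Fin n → ℤ)
    (ha : EvTrans a ta) :
    ∃ K : ℕ, ∀ (x : Equiv.Perm (X n)) (tx : Fin n → ℤ), EvTrans x tx →
      x⁻¹ * a * x = b →
      ∀ i j : Fin n, ta i ≠ 0 → ta j ≠ 0 →
      ∀ li lj : ℤ, tx i = li * |ta i| → tx j = lj * |ta j| →
      ∀ r s : ℕ, r < (ta i).natAbs → s < (ta j).natAbs →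
      (∃ A : Set (X n), IsInfOrbit a A ∧ AlmostEq (Xir i ta r ∪ Xir j ta s) A) →
      |(|li| - |lj|)| ≤ (K : ℤ) := by
  have hpair : ∀ i j : Fin n, ∀ᶠ K : ℕ in Filter.atTop, ∀ (x : Equiv.Perm (X n)) tx li lj,
      EvTrans x tx → x⁻¹ * a * x = b → tx i = li * |ta i| → tx j = lj * |ta j| →
      ∀ r s : ℕ, r < (ta i).natAbs → s < (ta j).natAbs →
      (∃ A : Set (X n), IsInfOrbit a A ∧ AlmostEq (Xir i ta r ∪ Xir j ta s) A) →
      |(|li| - |lj|)| ≤ (K : ℤ) := by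
    intro i j
    by_cases href : ∃ (x' : Equiv.Perm (X n)) (tx' : Fin n → ℤ) (li' lj' : ℤ), EvTrans x' tx' ∧
        x'⁻¹ * a * x' = b ∧ tx' i = li' * |ta i| ∧ tx' j = lj' * |ta j|
    · obtain ⟨x', tx', li', lj', hx', hx'b, hli', hlj'⟩ := href
      filter_upwards [Filter.eventually_ge_atTop (|li'| + |lj'|).toNat] with K hK
      rintro x tx li lj hx hxb hli hlj r s hr hs ⟨A, hA, hAeq⟩
      have := abs_abs_sub_abs_le_of_conj ha hx hx' hxb hx'b hli hlj hli' hlj' hr hs hA hAeq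
      omega
    · exact Filter.Eventually.of_forall fun _ x tx li lj hx hxb hli hlj _ _ _ _ _ =>
        absurd ⟨x, tx, li, lj, hx, hxb, hli, hlj⟩ href
  obtain ⟨K, hK⟩ := (Filter.eventually_all.2 fun i => Filter.eventually_all.2 (hpair i)).exists
  exact ⟨K, fun x tx hx hxb i j _ _ li lj hli hlj => hK i j x tx li lj hx hxb hli hlj⟩

theorem statement10 (n : ℕ) (hn : 2 ≤ n) (a b : Equiv.Perm (X n)) (ta tb : Fin n → ℤ)
    (ha : EvTrans a ta) (hb : EvTrans b tb) :
    ∃ K : ℕ, ∀ (x : Equiv.Perm (X n)) (tx : Fin n → ℤ), EvTrans x tx →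
      x⁻¹ * a * x = b →
      ∀ i j : Fin n, ta i ≠ 0 → ta j ≠ 0 →
      ∀ li lj : ℤ, tx i = li * |ta i| → tx j = lj * |ta j| →
      ∀ r s : ℕ, r < (ta i).natAbs → s < (ta j).natAbs →
      (∃ A : Set (X n), IsInfOrbit a A ∧ AlmostEq (Xir i ta r ∪ Xir j ta s) A) →
      |(|li| - |lj|)| ≤ (K : ℤ) :=
  statement10_general n a b ta ha
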